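/- arXiv:1603.07884 — 3 statements merged into one kernel-verified Lean document; each statement's English description precedes it below -/
import Mathlib

section
/- For integers n and k with 1 ≤ k and 2k ≤ n, ([n]_q / [n-k]_q) · [n-k choose k]_q = q^k [n-k choose k]_q + [n-k-1 choose k-1]_q. -/
/-- q-integer [n]_q = (1-q^n)/(1-q). -/
noncomputable def qint (q : ℂ) (n : ℕ) : ℂ := (1 - q ^ n) / (1 - q)

/-- q-factorial [n]_q!. -/
noncomputable def qfact (q : ℂ) (n : ℕ) : ℂ := ∏ i ∈ Finset.range n, qint q (i + 1)

/-- Gaussian (q-binomial) coefficient, 0 for k > n. -/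
noncomputable def qbinom (q : ℂ) (n k : ℕ) : ℂ :=
  if k ≤ n then qfact q n / (qfact q (n - k) * qfact q k) else 0

/-- q-shifted factorial (x;q)_n. -/
noncomputable def qpoch (x q : ℂ) (n : ℕ) : ℂ := ∏ i ∈ Finset.range n, (1 - q ^ i * x)

/-! The identity is `[n] = q^k [n-k] + [k]` combined with the absorption identity
`[k] [n-k choose k] = [n-k] [n-k-1 choose k-1]`. Outside the roots of unity all q-integers
`[m]`, `m ≥ 1`, are nonzero, so the q-factorials can be cancelled freely. -/

section QAnalogues

variable {q : ℂ}

/-- At `q = 1` both sides are the junk value `0`. -/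
theorem qint_add (q : ℂ) (a b : ℕ) : qint q (a + b) = q ^ a * qint q b + qint q a := by
  by_cases hq : q = 1
  · simp [qint, hq]
  · have : 1 - q ≠ 0 := sub_ne_zero.mpr (Ne.symm hq)
    simp only [qint]
    field_simp
    ring

theorem qint_ne_zero (hq : ¬IsOfFinOrder q) {m : ℕ} (hm : m ≠ 0) : qint q m ≠ 0 := by
  have hpow : q ^ m ≠ 1 := fun h => hq (isOfFinOrder_iff_pow_eq_one.mpr ⟨m, Nat.pos_of_ne_zero hm, h⟩)
  have hq1 : q ≠ 1 := fun h => hq (h ▸ IsOfFinOrder.one)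
  exact div_ne_zero (sub_ne_zero.mpr hpow.symm) (sub_ne_zero.mpr hq1.symm)

theorem qfact_succ (q : ℂ) (m : ℕ) : qfact q (m + 1) = qfact q m * qint q (m + 1) :=
  Finset.prod_range_succ _ m

theorem qfact_ne_zero (hq : ¬IsOfFinOrder q) (m : ℕ) : qfact q m ≠ 0 :=
  Finset.prod_ne_zero_iff.mpr fun i _ => qint_ne_zero hq i.succ_ne_zero

theorem qbinom_of_le (q : ℂ) {m k : ℕ} (h : k ≤ m) :
    qbinom q m k = qfact q m / (qfact q (m - k) * qfact q k) :=
  if_pos h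

theorem qbinom_of_lt (q : ℂ) {m k : ℕ} (h : m < k) : qbinom q m k = 0 :=
  if_neg h.not_ge

theorem qint_mul_qbinom_succ (hq : ¬IsOfFinOrder q) (m k : ℕ) :
    qint q (k + 1) * qbinom q (m + 1) (k + 1) = qint q (m + 1) * qbinom q m k := by
  rcases le_or_gt k m with hkm | hmk
  · rw [qbinom_of_le q (by omega : k + 1 ≤ m + 1), qbinom_of_le q hkm,
      Nat.add_sub_add_right, qfact_succ, qfact_succ q k]
    have := qfact_ne_zero hq (m - k)
    have := qfact_ne_zero hq k
    have := qint_ne_zero hq k.succ_ne_zero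
    field_simp
  · rw [qbinom_of_lt q (by omega), qbinom_of_lt q hmk, mul_zero, mul_zero]

end QAnalogues

theorem qbinom_ratio_identity_general (q : ℂ) (hq1 : ‖q‖ < 1)
    (n k : ℕ) (hk : 1 ≤ k) (hkn : 2 * k ≤ n) :
    qint q n / qint q (n - k) * qbinom q (n - k) k =
      q ^ k * qbinom q (n - k) k + qbinom q (n - k - 1) (k - 1) := by
  have hq : ¬IsOfFinOrder q := fun h => hq1.ne h.norm_eq_one
  obtain ⟨i, rfl⟩ : ∃ i, k = i + 1 := ⟨k - 1, by omega⟩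
  obtain ⟨j, hj⟩ : ∃ j, n - (i + 1) = j + 1 := ⟨n - (i + 1) - 1, by omega⟩
  have hn : n = (i + 1) + (j + 1) := by omega
  have hj0 := qint_ne_zero hq j.succ_ne_zero
  rw [hj, Nat.add_sub_cancel, Nat.add_sub_cancel, hn, qint_add, add_div, add_mul,
    mul_div_cancel_right₀ _ hj0, div_mul_eq_mul_div, qint_mul_qbinom_succ hq,
    mul_div_cancel_left₀ _ hj0]

theorem qbinom_ratio_identity (q : ℂ) (hq0 : 0 < ‖q‖) (hq1 : ‖q‖ < 1)
    (n k : ℕ) (hk : 1 ≤ k) (hkn : 2 * k ≤ n) :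
    qint q n / qint q (n - k) * qbinom q (n - k) k =
      q ^ k * qbinom q (n - k) k + qbinom q (n - k - 1) (k - 1) :=
  qbinom_ratio_identity_general q hq1 n k hk hkn
end

section
/- The q-Chebyshev polynomials of the second kind satisfy the explicit formula U_n(x,s,q) = Σ_{j=0}^{⌊n/2⌋} q^{j²} [n-j choose j]_q · ((-q;q)_{n-j}/(-q;q)_j) · s^j x^{n-2j} for all n ≥ 0. -/
/-- q-Chebyshev polynomials of the second kind. -/
noncomputable def qcU (x s q : ℂ) : ℕ → ℂ
  | 0 => 1
  | 1 => (1 + q) * x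
  | n + 2 => (1 + q ^ (n + 2)) * x * qcU x s q (n + 1) + q ^ (n + 1) * s * qcU x s q n

/-!
Writing `U_n = ∑ⱼ c(n, j) sʲ xⁿ⁻²ʲ`, the three-term recurrence for `U_n` amounts to
`c(n+2, j+1) = (1 + q^(n+2)) c(n+1, j+1) + q^(n+1) c(n, j)`. After cancelling the q-shifted
factorials, this is a linear combination of the two q-Pascal rules
`[m+1, j+1] = [m, j] + q^(j+1) [m, j+1]` and `[m+1, j+1] = q^(m-j) [m, j] + [m, j+1]`.
These hold for `qbinom`, a quotient of q-factorials, as long as no `1 - qⁱ` vanishes,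
i.e. `q` is not a root of unity, which `‖q‖ < 1` guarantees.
-/

namespace QChebyshev

noncomputable def qcUCoeff (q : ℂ) (n j : ℕ) : ℂ :=
  q ^ (j ^ 2) * qbinom q (n - j) j * (qpoch (-q) q (n - j) / qpoch (-q) q j)

noncomputable def qcUTerm (x s q : ℂ) (n j : ℕ) : ℂ :=
  qcUCoeff q n j * s ^ j * x ^ (n - 2 * j)

variable {q : ℂ}

lemma qfact_zero : qfact q 0 = 1 :=
  Finset.prod_range_zero _

lemma qfact_succ (n : ℕ) : qfact q (n + 1) = qfact q n * qint q (n + 1) :=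
  Finset.prod_range_succ _ n

lemma qpoch_neg_succ (n : ℕ) : qpoch (-q) q (n + 1) = qpoch (-q) q n * (1 + q ^ (n + 1)) := by
  rw [qpoch, Finset.prod_range_succ, ← qpoch]; ring

lemma qbinom_of_lt {n k : ℕ} (h : n < k) : qbinom q n k = 0 :=
  if_neg (Nat.not_le.2 h)

lemma qbinom_of_add_eq {n k l : ℕ} (h : k + l = n) :
    qbinom q n k = qfact q n / (qfact q l * qfact q k) := by
  rw [qbinom, if_pos (by omega), show n - k = l by omega]

lemma qcUCoeff_of_lt {n j : ℕ} (h : n < 2 * j) : qcUCoeff q n j = 0 := by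
  rw [qcUCoeff, qbinom_of_lt (by omega), mul_zero, zero_mul]

lemma qcUTerm_of_lt (x s : ℂ) {n j : ℕ} (h : n < 2 * j) : qcUTerm x s q n j = 0 := by
  rw [qcUTerm, qcUCoeff_of_lt h, zero_mul, zero_mul]

section NotRootOfUnity

variable (hq : ¬IsOfFinOrder q)
include hq

lemma pow_ne_one {n : ℕ} (hn : n ≠ 0) : q ^ n ≠ 1 :=
  fun h => hq (isOfFinOrder_iff_pow_eq_one.2 ⟨n, Nat.pos_of_ne_zero hn, h⟩)

lemma one_sub_pow_ne_zero {n : ℕ} (hn : n ≠ 0) : 1 - q ^ n ≠ 0 :=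
  sub_ne_zero.2 (pow_ne_one hq hn).symm

lemma one_add_pow_ne_zero {n : ℕ} (hn : n ≠ 0) : 1 + q ^ n ≠ 0 := by
  intro h
  have h2n : q ^ (2 * n) = 1 := by
    rw [mul_comm, pow_mul, eq_neg_of_add_eq_zero_right h]; norm_num
  exact pow_ne_one hq (by omega) h2n

lemma qfact_ne_zero (n : ℕ) : qfact q n ≠ 0 :=
  Finset.prod_ne_zero_iff.2 fun i _ =>
    div_ne_zero (one_sub_pow_ne_zero hq i.succ_ne_zero)
      (by simpa using one_sub_pow_ne_zero hq one_ne_zero)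

lemma qpoch_neg_ne_zero (n : ℕ) : qpoch (-q) q n ≠ 0 :=
  Finset.prod_ne_zero_iff.2 fun i _ => by
    rw [mul_neg, sub_neg_eq_add, ← pow_succ]; exact one_add_pow_ne_zero hq i.succ_ne_zero

lemma qbinom_self (n : ℕ) : qbinom q n n = 1 := by
  rw [qbinom_of_add_eq (add_zero n), qfact_zero, one_mul, div_self (qfact_ne_zero hq n)]

lemma qbinom_zero_right (n : ℕ) : qbinom q n 0 = 1 := by
  rw [qbinom_of_add_eq (zero_add n), qfact_zero, mul_one, div_self (qfact_ne_zero hq n)]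

lemma qbinom_succ_succ (m j : ℕ) :
    qbinom q (m + 1) (j + 1) = qbinom q m j + q ^ (j + 1) * qbinom q m (j + 1) := by
  rcases lt_trichotomy j m with h | rfl | h
  · obtain ⟨r, rfl⟩ := Nat.exists_eq_add_of_lt h
    rw [qbinom_of_add_eq (show j + 1 + (r + 1) = j + r + 1 + 1 by ring),
      qbinom_of_add_eq (show j + (r + 1) = j + r + 1 by ring),
      qbinom_of_add_eq (show j + 1 + r = j + r + 1 by ring),
      qfact_succ (j + r + 1), qfact_succ r, qfact_succ j, qint, qint, qint]
    have := qfact_ne_zero hq (j + r + 1)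
    have := qfact_ne_zero hq r
    have := qfact_ne_zero hq j
    have : (1 : ℂ) - q ≠ 0 := by simpa using one_sub_pow_ne_zero hq one_ne_zero
    have := one_sub_pow_ne_zero hq j.succ_ne_zero
    have := one_sub_pow_ne_zero hq r.succ_ne_zero
    field_simp
    ring
  · rw [qbinom_self hq, qbinom_self hq, qbinom_of_lt (Nat.lt_succ_self j), mul_zero, add_zero]
  · simp only [qbinom_of_lt h, qbinom_of_lt (Nat.lt_succ_of_lt h),
      qbinom_of_lt (Nat.succ_lt_succ h), mul_zero, add_zero]

lemma pow_mul_qbinom_succ_succ (m j : ℕ) :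
    q ^ j * qbinom q (m + 1) (j + 1) = q ^ m * qbinom q m j + q ^ j * qbinom q m (j + 1) := by
  rcases lt_trichotomy j m with h | rfl | h
  · obtain ⟨r, rfl⟩ := Nat.exists_eq_add_of_lt h
    rw [qbinom_of_add_eq (show j + 1 + (r + 1) = j + r + 1 + 1 by ring),
      qbinom_of_add_eq (show j + (r + 1) = j + r + 1 by ring),
      qbinom_of_add_eq (show j + 1 + r = j + r + 1 by ring),
      qfact_succ (j + r + 1), qfact_succ r, qfact_succ j, qint, qint, qint]
    have := qfact_ne_zero hq (j + r + 1)
    have := qfact_ne_zero hq r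
    have := qfact_ne_zero hq j
    have : (1 : ℂ) - q ≠ 0 := by simpa using one_sub_pow_ne_zero hq one_ne_zero
    have := one_sub_pow_ne_zero hq j.succ_ne_zero
    have := one_sub_pow_ne_zero hq r.succ_ne_zero
    field_simp
    ring
  · rw [qbinom_self hq, qbinom_self hq, qbinom_of_lt (Nat.lt_succ_self j), mul_zero, add_zero]
  · simp only [qbinom_of_lt h, qbinom_of_lt (Nat.lt_succ_of_lt h),
      qbinom_of_lt (Nat.succ_lt_succ h), mul_zero, add_zero]

lemma one_add_pow_mul_qbinom_succ_succ (m j : ℕ) :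
    q ^ j * (1 + q ^ (m + 1)) * qbinom q (m + 1) (j + 1) =
      q ^ j * (1 + q ^ (m + j + 2)) * qbinom q m (j + 1) +
        q ^ m * (1 + q ^ (j + 1)) * qbinom q m j := by
  linear_combination pow_mul_qbinom_succ_succ hq m j + q ^ (m + j + 1) * qbinom_succ_succ hq m j

lemma qcUCoeff_succ_succ (n j : ℕ) :
    qcUCoeff q (n + 2) (j + 1) =
      (1 + q ^ (n + 2)) * qcUCoeff q (n + 1) (j + 1) + q ^ (n + 1) * qcUCoeff q n j := by
  rcases le_or_gt j n with h | h
  · obtain ⟨m, rfl⟩ := Nat.exists_eq_add_of_le h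
    simp only [qcUCoeff, show j + m + 2 - (j + 1) = m + 1 by omega,
      show j + m + 1 - (j + 1) = m by omega, Nat.add_sub_cancel_left, qpoch_neg_succ]
    have := qpoch_neg_ne_zero hq m
    have := qpoch_neg_ne_zero hq j
    have := one_add_pow_ne_zero hq j.succ_ne_zero
    field_simp
    linear_combination q ^ (j ^ 2 + j + 1) * one_add_pow_mul_qbinom_succ_succ hq m j
  · rw [qcUCoeff_of_lt (by omega), qcUCoeff_of_lt (by omega), qcUCoeff_of_lt (by omega),
      mul_zero, mul_zero, add_zero]

lemma qcUTerm_zero_right (x s : ℂ) (n : ℕ) : qcUTerm x s q n 0 = qpoch (-q) q n * x ^ n := by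
  simp [qcUTerm, qcUCoeff, qbinom_zero_right hq, qpoch]

lemma qcUTerm_succ_succ (x s : ℂ) (n j : ℕ) :
    qcUTerm x s q (n + 2) (j + 1) =
      (1 + q ^ (n + 2)) * x * qcUTerm x s q (n + 1) (j + 1) +
        q ^ (n + 1) * s * qcUTerm x s q n j := by
  have hexp : n + 2 - 2 * (j + 1) = n - 2 * j := by omega
  rcases lt_or_ge n (2 * j + 1) with h | h
  · rw [qcUTerm, qcUTerm, qcUTerm, qcUCoeff_succ_succ hq, qcUCoeff_of_lt (by omega), hexp]
    ring
  · rw [qcUTerm, qcUTerm, qcUTerm, qcUCoeff_succ_succ hq, hexp,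
      show n - 2 * j = n + 1 - 2 * (j + 1) + 1 by omega]
    ring

theorem qcU_eq_sum_range (x s : ℂ) {n N : ℕ} (hN : n / 2 < N) :
    qcU x s q n = ∑ j ∈ Finset.range N, qcUTerm x s q n j := by
  obtain ⟨M, rfl⟩ := Nat.exists_eq_add_one_of_ne_zero (Nat.ne_zero_of_lt hN)
  induction n using Nat.twoStepInduction generalizing M with
  | zero =>
    rw [Finset.sum_range_succ', Finset.sum_eq_zero fun j _ => qcUTerm_of_lt x s (by omega),
      qcUTerm_zero_right hq]
    simp [qcU, qpoch]
  | one =>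
    rw [Finset.sum_range_succ', Finset.sum_eq_zero fun j _ => qcUTerm_of_lt x s (by omega),
      qcUTerm_zero_right hq]
    simp [qcU, qpoch]
  | more n ih ih_succ =>
    obtain ⟨M, rfl⟩ := Nat.exists_eq_add_one_of_ne_zero (show M ≠ 0 by omega)
    rw [qcU, ih_succ (M + 1) (by omega), ih M (by omega),
      Finset.sum_range_succ' (qcUTerm x s q (n + 1)),
      Finset.sum_range_succ' (qcUTerm x s q (n + 2))]
    simp only [qcUTerm_succ_succ hq, Finset.sum_add_distrib, ← Finset.mul_sum,
      qcUTerm_zero_right hq, qpoch_neg_succ (n + 1)]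
    ring

end NotRootOfUnity

end QChebyshev

theorem qcU_explicit_general (q : ℂ) (hq1 : ‖q‖ < 1)
    (x s : ℂ) (n : ℕ) :
    qcU x s q n = ∑ j ∈ Finset.range (n / 2 + 1),
      q ^ (j ^ 2) * qbinom q (n - j) j * (qpoch (-q) q (n - j) / qpoch (-q) q j) *
        s ^ j * x ^ (n - 2 * j) :=
  QChebyshev.qcU_eq_sum_range (fun h => hq1.ne h.norm_eq_one) x s (Nat.lt_succ_self _)

theorem qcU_explicit (q : ℂ) (hq0 : 0 < ‖q‖) (hq1 : ‖q‖ < 1)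
    (x s : ℂ) (n : ℕ) :
    qcU x s q n = ∑ j ∈ Finset.range (n / 2 + 1),
      q ^ (j ^ 2) * qbinom q (n - j) j * (qpoch (-q) q (n - j) / qpoch (-q) q j) *
        s ^ j * x ^ (n - 2 * j) :=
  qcU_explicit_general q hq1 x s n
end

section
/- For n ≥ 0, the sum of the incomplete q-Chebyshev polynomials of the second kind over all valid truncation indices satisfies Σ_{k=0}^{⌊n/2⌋} U_n^k(x,s,q) = (⌊n/2⌋ − n/2 + 1) U_n(x,s,q) + (x/2) (d/dx) U_n(x,s,q). -/
/-- Truncated q-Chebyshev polynomial of the second kind, as a polynomial in x: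
`UP s q n (k+1)` is U_n^k, and `UP s q n (n/2+1)` is the full polynomial U_n. -/
noncomputable def UP (s q : ℂ) (n m : ℕ) : Polynomial ℂ :=
  ∑ j ∈ Finset.range m,
    Polynomial.C (q ^ (j ^ 2) * qbinom q (n - j) j *
      (qpoch (-q) q (n - j) / qpoch (-q) q j) * s ^ j) * Polynomial.X ^ (n - 2 * j)

/-!
The `j`-th term of `U_n` occurs in `U_n^k` exactly for `k ≥ j`, so it is counted `⌊n/2⌋ + 1 - j`
times in the sum. Since `x d/dx` multiplies `x^(n-2j)` by `n - 2j`, and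
`⌊n/2⌋ + 1 - j = (⌊n/2⌋ - n/2 + 1) + (n - 2j)/2`, the identity holds term by term, whatever the
coefficients are.
-/

open Finset Polynomial

theorem Finset.sum_range_succ_sum_range_succ {M : Type*} [AddCommMonoid M] (f : ℕ → M) (m : ℕ) :
    ∑ k ∈ range (m + 1), ∑ j ∈ range (k + 1), f j = ∑ j ∈ range (m + 1), (m + 1 - j) • f j := by
  rw [Finset.sum_comm' (t' := range (m + 1)) (s' := fun j => Ico j (m + 1))]
  · simp only [sum_const, Nat.card_Ico]
  · intro k j
    simp only [mem_range, mem_Ico]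
    omega

theorem Polynomial.X_mul_derivative_C_mul_X_pow {R : Type*} [CommSemiring R] (a : R) (e : ℕ) :
    X * derivative (C a * X ^ e) = C (a * e) * X ^ e := by
  rcases e with _ | e
  · simp
  · rw [derivative_C_mul_X_pow, Nat.add_sub_cancel, mul_left_comm, ← pow_succ']

section

variable {K : Type*} [Field K] [NeZero (2 : K)]

theorem Polynomial.nsmul_C_mul_X_pow_sub_two_mul {m n j : ℕ} (hjm : j ≤ m) (hjn : 2 * j ≤ n)
    (a : K) :
    (m + 1 - j) • (C a * X ^ (n - 2 * j)) =
      C ((m : K) - n / 2 + 1) * (C a * X ^ (n - 2 * j)) +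
        C (1 / 2) * (X * derivative (C a * X ^ (n - 2 * j))) := by
  rw [X_mul_derivative_C_mul_X_pow, nsmul_eq_mul, ← C_eq_natCast]
  simp only [← mul_assoc, ← C_mul, ← add_mul, ← C_add]
  congr 2
  push_cast [Nat.cast_sub (by omega : j ≤ m + 1), Nat.cast_sub hjn]
  field_simp
  ring

theorem Polynomial.sum_truncations_eq_add_X_mul_derivative (c : ℕ → K) {m n : ℕ}
    (hmn : 2 * m ≤ n) :
    ∑ k ∈ range (m + 1), ∑ j ∈ range (k + 1), C (c j) * X ^ (n - 2 * j) =
      C ((m : K) - n / 2 + 1) * ∑ j ∈ range (m + 1), C (c j) * X ^ (n - 2 * j) +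
        C (1 / 2) * (X * derivative (∑ j ∈ range (m + 1), C (c j) * X ^ (n - 2 * j))) := by
  simp only [sum_range_succ_sum_range_succ, derivative_sum, mul_sum, ← sum_add_distrib]
  refine sum_congr rfl fun j hj => nsmul_C_mul_X_pow_sub_two_mul ?_ ?_ _
  all_goals rw [mem_range] at hj; omega

end

theorem sum_Uinc_general (q : ℂ)
    (s : ℂ) (n : ℕ) :
    ∑ k ∈ Finset.range (n / 2 + 1), UP s q n (k + 1) =
      Polynomial.C (((n / 2 : ℕ) : ℂ) - (n : ℂ) / 2 + 1) * UP s q n (n / 2 + 1) +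
        Polynomial.C (1 / 2) *
          (Polynomial.X * Polynomial.derivative (UP s q n (n / 2 + 1))) :=
  sum_truncations_eq_add_X_mul_derivative _ (Nat.mul_div_le n 2)

theorem sum_Uinc (q : ℂ) (hq0 : 0 < ‖q‖) (hq1 : ‖q‖ < 1)
    (s : ℂ) (n : ℕ) :
    ∑ k ∈ Finset.range (n / 2 + 1), UP s q n (k + 1) =
      Polynomial.C (((n / 2 : ℕ) : ℂ) - (n : ℂ) / 2 + 1) * UP s q n (n / 2 + 1) +
        Polynomial.C (1 / 2) *
          (Polynomial.X * Polynomial.derivative (UP s q n (n / 2 + 1))) :=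
  sum_Uinc_general q s n
end
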